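/- arXiv:1303.5942 — 3 statements merged into one kernel-verified Lean document; each statement's English description precedes it below -/
import Mathlib

section
/- For all integers k ≥ 1 and n ≥ 1, −log₂((1 + 2^{-k})^{1/n} − 1) ≤ k + log₂ n + 1/(2 log 2). -/
/-!
Write `t = 2^(-k) ∈ (0, 1]`. Since `exp u ≥ 1 + u`, we get `(1 + t)^(1/n) - 1 ≥ log (1 + t) / n`,
and `log (1 + t) ≥ 2t / (2 + t) ≥ 2t/3 ≥ e^(-1/2) t` on `[0, 1]`. Taking `log₂` of
`(1 + t)^(1/n) - 1 ≥ e^(-1/2) · 2^(-k) / n` gives the bound, the constant `1 / (2 log 2)` being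
`-log₂ e^(-1/2)`.
-/

open Real

namespace Real

lemma mul_log_le_rpow_sub_one {y : ℝ} (hy : 0 < y) (x : ℝ) : x * log y ≤ y ^ x - 1 := by
  have := add_one_le_exp (log y * x)
  rw [← rpow_def_of_pos hy] at this
  linarith [mul_comm x (log y)]

lemma exp_neg_half_le_two_thirds : exp (-(1 / 2)) ≤ 2 / 3 := by
  rw [exp_neg, inv_le_comm₀ (exp_pos _) (by norm_num)]
  linarith [add_one_le_exp (1 / 2)]

lemma exp_neg_half_mul_le_log_one_add {t : ℝ} (ht₀ : 0 ≤ t) (ht₁ : t ≤ 1) :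
    exp (-(1 / 2)) * t ≤ log (1 + t) :=
  calc exp (-(1 / 2)) * t ≤ 2 / 3 * t := by gcongr; exact exp_neg_half_le_two_thirds
    _ ≤ 2 * t / (t + 2) := by rw [le_div_iff₀ (by linarith)]; nlinarith
    _ ≤ log (1 + t) := le_log_one_add_of_nonneg ht₀

lemma exp_neg_half_mul_div_le_one_add_rpow_inv_sub_one {t : ℝ} (ht₀ : 0 ≤ t) (ht₁ : t ≤ 1)
    {n : ℝ} (hn : 0 < n) :
    exp (-(1 / 2)) * t / n ≤ (1 + t) ^ (1 / n) - 1 :=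
  calc exp (-(1 / 2)) * t / n ≤ 1 / n * log (1 + t) := by
        rw [one_div_mul_eq_div]; gcongr; exact exp_neg_half_mul_le_log_one_add ht₀ ht₁
    _ ≤ (1 + t) ^ (1 / n) - 1 := mul_log_le_rpow_sub_one (by linarith) _

lemma logb_exp_neg_half (b : ℝ) : logb b (exp (-(1 / 2))) = -(1 / (2 * log b)) := by
  rw [logb, log_exp]
  ring

end Real

theorem stmt_9_general (k n : ℕ) (hn : 1 ≤ n) :
    -Real.logb 2 ((1 + (2:ℝ)^(-(k:ℝ)))^((1:ℝ)/(n:ℝ)) - 1) ≤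
      (k : ℝ) + Real.logb 2 n + 1/(2 * Real.log 2) := by
  have hn₀ : (0:ℝ) < n := by exact_mod_cast hn
  have ht₁ : (2:ℝ) ^ (-(k:ℝ)) ≤ 1 :=
    rpow_le_one_of_one_le_of_nonpos (by norm_num) (by simp)
  have key := exp_neg_half_mul_div_le_one_add_rpow_inv_sub_one (by positivity) ht₁ hn₀
  have hlog := logb_le_logb_of_le (b := 2) (by norm_num) (by positivity) key
  rw [logb_div (by positivity) hn₀.ne', logb_mul (exp_pos _).ne' (by positivity),
    logb_exp_neg_half, logb_rpow (by norm_num) (by norm_num)] at hlog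
  linarith

theorem stmt_9 (k n : ℕ) (hk : 1 ≤ k) (hn : 1 ≤ n) :
    -Real.logb 2 ((1 + (2:ℝ)^(-(k:ℝ)))^((1:ℝ)/(n:ℝ)) - 1) ≤
      (k : ℝ) + Real.logb 2 n + 1/(2 * Real.log 2) :=
  stmt_9_general k n hn
end

section
/- Let U be uniformly distributed on [0,1), let p ∈ [0,1], and for each k let U(k) = ⌊U·2^k⌋/2^k and let p(k) satisfy |p(k) − p| ≤ 2^{-k}. Then for every k, P(|U(k) − p(k)| ≤ 2/2^k) ≤ P(|U − p| ≤ 4/2^k) ≤ 8/2^k. -/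
open MeasureTheory
open scoped ProbabilityTheory

lemma abs_sub_floor_mul_div_le (x : ℝ) {c : ℝ} (hc : 0 < c) : |x - ⌊x * c⌋ / c| ≤ 1 / c := by
  have hfloor_le : (⌊x * c⌋ : ℝ) / c ≤ x := by
    rw [div_le_iff₀ hc]; exact Int.floor_le _
  have hlt_floor : x < (⌊x * c⌋ + 1 : ℝ) / c := by
    rw [lt_div_iff₀ hc]; exact Int.lt_floor_add_one _
  rw [add_div] at hlt_floor
  rw [abs_of_nonneg (sub_nonneg.mpr hfloor_le)]
  linarith

lemma measure_abs_sub_le_le_of_map_eq_restrict {Ω : Type*} [MeasurableSpace Ω] {μ : Measure Ω}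
    {U : Ω → ℝ} {s : Set ℝ} (hU : μ.map U = volume.restrict s) (hs : volume s ≠ 0) (p r : ℝ) :
    μ {ω | |U ω - p| ≤ r} ≤ ENNReal.ofReal (2 * r) := by
  have hUm : AEMeasurable U μ := .of_map_ne_zero <| by rwa [hU, Ne, Measure.restrict_eq_zero]
  have hball : {ω | |U ω - p| ≤ r} = U ⁻¹' Metric.closedBall p r := by
    ext ω; simp [Real.dist_eq]
  calc μ {ω | |U ω - p| ≤ r}
      = volume.restrict s (Metric.closedBall p r) := by
        rw [hball, ← hU, Measure.map_apply_of_aemeasurable hUm Metric.isClosed_closedBall.measurableSet]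
    _ ≤ volume (Metric.closedBall p r) := Measure.restrict_apply_le _ _
    _ = ENNReal.ofReal (2 * r) := Real.volume_closedBall p r

theorem stmt_10_general {Ω : Type*} [MeasureSpace Ω]
    (U : Ω → ℝ) (hU : Measure.map U ℙ = volume.restrict (Set.Ico (0:ℝ) 1))
    (p : ℝ) (k : ℕ)
    (pk : ℝ) (hpk : |pk - p| ≤ 1/2^k) :
    ℙ {ω | |(⌊U ω * 2^k⌋ : ℝ)/2^k - pk| ≤ 2/2^k} ≤ ℙ {ω | |U ω - p| ≤ 4/2^k} ∧
    ℙ {ω | |U ω - p| ≤ 4/2^k} ≤ ENNReal.ofReal (8/2^k) := by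
  have h2k : (0:ℝ) < 2^k := by positivity
  constructor
  · refine measure_mono fun ω hω => ?_
    simp only [Set.mem_ofPred_eq] at hω ⊢
    calc |U ω - p|
        ≤ |U ω - ⌊U ω * 2^k⌋ / 2^k| + |⌊U ω * 2^k⌋ / 2^k - pk| + |pk - p| := by
          linarith [abs_sub_le (U ω) (⌊U ω * 2^k⌋ / 2^k) p, abs_sub_le (⌊U ω * 2^k⌋ / 2^k : ℝ) pk p]
      _ ≤ 1/2^k + 2/2^k + 1/2^k := by gcongr; exact abs_sub_floor_mul_div_le _ h2k
      _ = 4/2^k := by ring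
  · calc ℙ {ω | |U ω - p| ≤ 4/2^k}
        ≤ ENNReal.ofReal (2 * (4/2^k)) :=
          measure_abs_sub_le_le_of_map_eq_restrict hU (by simp) p _
      _ = ENNReal.ofReal (8/2^k) := by ring_nf

theorem stmt_10 {Ω : Type*} [MeasureSpace Ω] [IsProbabilityMeasure (ℙ : Measure Ω)]
    (U : Ω → ℝ) (hU : Measure.map U ℙ = volume.restrict (Set.Ico (0:ℝ) 1))
    (p : ℝ) (hp : p ∈ Set.Icc (0:ℝ) 1) (k : ℕ)
    (pk : ℝ) (hpk : |pk - p| ≤ 1/2^k) :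
    ℙ {ω | |(⌊U ω * 2^k⌋ : ℝ)/2^k - pk| ≤ 2/2^k} ≤ ℙ {ω | |U ω - p| ≤ 4/2^k} ∧
    ℙ {ω | |U ω - p| ≤ 4/2^k} ≤ ENNReal.ofReal (8/2^k) :=
  stmt_10_general U hU p k pk hpk
end

section
/- In the equatorial case φ_j = 0 for all j, for b ∈ {-1,+1}^n, p(b) = cos²(θ/2)·p1(b) + sin²(θ/2)·p2(b) with a1(b)² = a2(b)² = 2^{-n}, and the expectation of the product ∏_j b_j under p equals cos(∑_{j=1}^n θ_j). -/
/-! With all azimuths zero every half-angle in `a1`, `a2` equals `∓π/4`, so `a1 = (√2/2)^n` and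
`a2 = (∏ b) (√2/2)^n`; since `(∏ b)^2 = 1` the mixture collapses, via `cos θ = cos²(θ/2) - sin²(θ/2)`,
to `p = 2^{-n} (1 + cos θ ∏ b)`. The parity `∏ b` averages to zero over the cube `{±1}^n` as soon as
`n ≥ 1`, while its square averages to one, which leaves `cos θ` as the expectation. -/

open Real Finset

section Signs

variable {R ι : Type*} [CommRing R] [Fintype ι]

lemma prod_sign_sq (s : ι → Bool) : (∏ j, if s j then (1 : R) else -1) ^ 2 = 1 := by
  rw [← prod_pow]
  exact prod_eq_one fun j _ => by cases s j <;> simp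

lemma sum_prod_sign_eq_zero [DecidableEq ι] [Nonempty ι] :
    ∑ s : ι → Bool, ∏ j, (if s j then (1 : R) else -1) = 0 := by
  rw [← Fintype.prod_sum (fun (_ : ι) (t : Bool) => if t then (1 : R) else -1)]
  exact prod_eq_zero (mem_univ (Classical.arbitrary ι)) (by simp)

end Signs

lemma cos_half_neg_pi_div_two_mul_sign (t : Bool) :
    cos ((0 - π / 2 * if t then 1 else -1) / 2) = √2 / 2 := by
  cases t <;> simp only [Bool.false_eq_true, if_true, if_false]
  · rw [show (0 - π / 2 * -1) / 2 = π / 4 by ring]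
    simp
  · rw [show (0 - π / 2 * 1) / 2 = -(π / 4) by ring]
    simp

lemma neg_sin_half_neg_pi_div_two_mul_sign (t : Bool) :
    -sin ((0 - π / 2 * if t then 1 else -1) / 2) = (if t then 1 else -1) * (√2 / 2) := by
  cases t <;> simp only [Bool.false_eq_true, if_true, if_false]
  · rw [show (0 - π / 2 * -1) / 2 = π / 4 by ring]
    simp
  · rw [show (0 - π / 2 * 1) / 2 = -(π / 4) by ring]
    simp

lemma sq_sqrt_two_div_two_pow (n : ℕ) : ((√2 / 2) ^ n) ^ 2 = 1 / 2 ^ n := by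
  rw [← pow_mul, mul_comm, pow_mul]
  norm_num [div_pow]

lemma cos_sq_half_mul_add_sin_sq_half_mul (x c P : ℝ) (hP : P ^ 2 = 1) :
    cos (x / 2) ^ 2 * (1 / 2 * (c + P * c) ^ 2) + sin (x / 2) ^ 2 * (1 / 2 * (c - P * c) ^ 2) =
      c ^ 2 * (1 + cos x * P) := by
  have hcos : cos x = cos (x / 2) ^ 2 - sin (x / 2) ^ 2 := by
    rw [← cos_two_mul', mul_div_cancel₀ x two_ne_zero]
  rw [hcos]
  linear_combination (1 / 2 * c ^ 2 * (cos (x / 2) ^ 2 + sin (x / 2) ^ 2)) * hP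
    + c ^ 2 * sin_sq_add_cos_sq (x / 2)

theorem stmt_19 (n : ℕ) (hn : 1 ≤ n) (θ : Fin n → ℝ)
    (b : (Fin n → Bool) → Fin n → ℝ)
    (hb : ∀ s j, b s j = if s j then 1 else -1)
    (a1 a2 p : (Fin n → Bool) → ℝ)
    (ha1 : ∀ s, a1 s = ∏ j, Real.cos ((0 - (π/2) * b s j)/2))
    (ha2 : ∀ s, a2 s = ∏ j, (-Real.sin ((0 - (π/2) * b s j)/2)))
    (hp : ∀ s, p s = Real.cos ((∑ j, θ j)/2)^2 * ((1/2) * (a1 s + a2 s)^2) +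
                     Real.sin ((∑ j, θ j)/2)^2 * ((1/2) * (a1 s - a2 s)^2)) :
    (∀ s, (a1 s)^2 = 1/2^n ∧ (a2 s)^2 = 1/2^n ∧
      p s = (1/2^n) * (1 + Real.cos (∑ j, θ j) * ∏ j, b s j)) ∧
    ∑ s : Fin n → Bool, p s * ∏ j, b s j = Real.cos (∑ j, θ j) := by
  obtain rfl : b = fun s j => if s j then 1 else -1 := funext₂ hb
  have : Nonempty (Fin n) := ⟨⟨0, hn⟩⟩
  have ha1' (s) : a1 s = (√2 / 2) ^ n := by
    simp only [ha1 s, cos_half_neg_pi_div_two_mul_sign, prod_const, card_univ, Fintype.card_fin]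
  have ha2' (s) : a2 s = (∏ j, if s j then 1 else -1) * (√2 / 2) ^ n := by
    simp only [ha2 s, neg_sin_half_neg_pi_div_two_mul_sign, prod_mul_distrib, prod_const,
      card_univ, Fintype.card_fin]
  have hp' (s) : p s = 1 / 2 ^ n * (1 + cos (∑ j, θ j) * ∏ j, if s j then 1 else -1) := by
    rw [hp, ha1', ha2', cos_sq_half_mul_add_sin_sq_half_mul _ _ _ (prod_sign_sq s),
      sq_sqrt_two_div_two_pow]
  refine ⟨fun s => ⟨by rw [ha1', sq_sqrt_two_div_two_pow], ?_, hp' s⟩, ?_⟩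
  · rw [ha2', mul_pow, prod_sign_sq, one_mul, sq_sqrt_two_div_two_pow]
  calc ∑ s : Fin n → Bool, p s * ∏ j, (if s j then 1 else -1)
      = 1 / 2 ^ n * ∑ s : Fin n → Bool, ∏ j, (if s j then (1 : ℝ) else -1)
          + ∑ _s : Fin n → Bool, 1 / 2 ^ n * cos (∑ j, θ j) := by
        rw [mul_sum, ← sum_add_distrib]
        refine sum_congr rfl fun s _ => ?_
        linear_combination hp' s * (∏ j, if s j then (1 : ℝ) else -1)
          + (1 / 2 ^ n * cos (∑ j, θ j)) * prod_sign_sq (R := ℝ) s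
    _ = cos (∑ j, θ j) := by
        rw [sum_prod_sign_eq_zero, sum_const, card_univ, Fintype.card_fun, Fintype.card_bool,
          Fintype.card_fin, nsmul_eq_mul]
        push_cast
        field_simp
        ring
end
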